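/- The image under Re of the closed hyperbolic disc in S of hyperbolic radius λ(r) = ln((1+r)/(1-r)) centered at 0 is exactly the interval [-(4/π)arctan r, (4/π)arctan r]. -/

import Mathlib

open Complex Set

/-- The strip `S = {z : -1 < Re z < 1}`. -/
def stripS : Set ℂ := {z : ℂ | -1 < z.re ∧ z.re < 1}

/-- The unit disc. -/
def discU : Set ℂ := {z : ℂ | ‖z‖ < 1}

/-- Hyperbolic density of the strip. -/
noncomputable def rhoS (z : ℂ) : ℝ := (Real.pi / 2) / Real.cos (Real.pi / 2 * z.re)

/-- Hyperbolic density of the unit disc. -/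
noncomputable def rhoU (z : ℂ) : ℝ := 2 / (1 - ‖z‖ ^ 2)

/-- Hyperbolic length of a curve in the strip. -/
noncomputable def hypLenS (γ : ℝ → ℂ) : ℝ := ∫ t in (0:ℝ)..1, rhoS (γ t) * ‖deriv γ t‖

/-- Hyperbolic length of a curve in the disc. -/
noncomputable def hypLenU (γ : ℝ → ℂ) : ℝ := ∫ t in (0:ℝ)..1, rhoU (γ t) * ‖deriv γ t‖

/-- Hyperbolic distance on the strip: infimum of hyperbolic lengths of C¹ curves. -/
noncomputable def dS (z₁ z₂ : ℂ) : ℝ :=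
  sInf { L : ℝ | ∃ γ : ℝ → ℂ, ContDiffOn ℝ 1 γ (Icc 0 1) ∧ γ 0 = z₁ ∧ γ 1 = z₂ ∧
    (∀ t ∈ Icc (0:ℝ) 1, γ t ∈ stripS) ∧ L = hypLenS γ }

/-- Hyperbolic distance on the unit disc. -/
noncomputable def dU (z₁ z₂ : ℂ) : ℝ :=
  sInf { L : ℝ | ∃ γ : ℝ → ℂ, ContDiffOn ℝ 1 γ (Icc 0 1) ∧ γ 0 = z₁ ∧ γ 1 = z₂ ∧
    (∀ t ∈ Icc (0:ℝ) 1, γ t ∈ discU) ∧ L = hypLenU γ }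

/-- The conformal map of the disc onto the strip, inverse of `z ↦ tan (π z / 4)`. -/
noncomputable def phiUS (z : ℂ) : ℂ :=
  (-(2 * Complex.I) / (Real.pi : ℂ)) * Complex.log ((1 + Complex.I * z) / (1 - Complex.I * z))

/-- Inverse hyperbolic tangent. -/
noncomputable def artanh (r : ℝ) : ℝ := Real.log ((1 + r) / (1 - r)) / 2

/-- A real-valued function is harmonic on a set. -/
def HarmonicOnR (u : ℂ → ℝ) (s : Set ℂ) : Prop :=
  ContDiffOn ℝ 2 u s ∧ ∀ z ∈ s,
    fderiv ℝ (fun w => fderiv ℝ u w 1) z 1 + fderiv ℝ (fun w => fderiv ℝ u w Complex.I) z Complex.I = 0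

/-- A complex-valued function is harmonic on a set. -/
def HarmonicOnC (f : ℂ → ℂ) (s : Set ℂ) : Prop :=
  ContDiffOn ℝ 2 f s ∧ ∀ z ∈ s,
    fderiv ℝ (fun w => fderiv ℝ f w 1) z 1 + fderiv ℝ (fun w => fderiv ℝ f w Complex.I) z Complex.I = 0

/-- Wirtinger derivative ∂f/∂z. -/
noncomputable def wderiv (f : ℂ → ℂ) (z : ℂ) : ℂ :=
  (fderiv ℝ f z 1 - Complex.I * fderiv ℝ f z Complex.I) / 2

/-- Wirtinger derivative ∂f/∂z̄. -/
noncomputable def wderivBar (f : ℂ → ℂ) (z : ℂ) : ℂ :=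
  (fderiv ℝ f z 1 + Complex.I * fderiv ℝ f z Complex.I) / 2

/-- Sense-preserving K-quasiregular C¹ map on a set. -/
def QRegOn (K : ℝ) (f : ℂ → ℂ) (s : Set ℂ) : Prop :=
  ContDiffOn ℝ 1 f s ∧ ∀ z ∈ s,
    ‖wderivBar f z‖ < ‖wderiv f z‖ ∧
    ‖wderiv f z‖ + ‖wderivBar f z‖
      ≤ K * (‖wderiv f z‖ - ‖wderivBar f z‖)

/-!
Along the real axis the density `rhoS` has the primitive `dSReal x = 2 artanh (tan (π x / 4))`
(the map `w ↦ tan (π w / 4)` carries `S` conformally onto the unit disc, where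
`d(0, t) = 2 artanh t`). For a curve `γ` in `S` from `z` to `0`,
`|dSReal (Re z)| = |∫ rhoS (γ t) * Re (γ' t)| ≤ ∫ rhoS (γ t) * ‖γ' t‖`,
so `dSReal |Re z| ≤ d_S(z, 0)`, with equality for real `z`, attained by the segment `[z, 0]`.
Finally `dSReal` is odd and increasing, and `dSReal ((4 / π) arctan r) = 2 artanh r = λ(r)`.
-/

open scoped Real

lemma cos_pi_div_two_mul_pos {x : ℝ} (hx : x ∈ Ioo (-1) 1) : 0 < Real.cos (π / 2 * x) :=
  Real.cos_pos_of_mem_Ioo ⟨by nlinarith [hx.1, Real.pi_pos], by nlinarith [hx.2, Real.pi_pos]⟩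

lemma rhoS_pos {z : ℂ} (hz : z ∈ stripS) : 0 < rhoS z :=
  div_pos (by positivity) (cos_pi_div_two_mul_pos hz)

lemma rhoS_ofReal_abs (x : ℝ) : rhoS ((|x| : ℝ) : ℂ) = rhoS x := by
  have : π / 2 * |x| = |π / 2 * x| := by rw [abs_mul, abs_of_pos (by positivity : (0 : ℝ) < π / 2)]
  rw [rhoS, rhoS, ofReal_re, ofReal_re, this, Real.cos_abs]

lemma continuousOn_rhoS : ContinuousOn rhoS stripS :=
  continuousOn_const.div (by fun_prop) fun _ hz ↦ (cos_pi_div_two_mul_pos hz).ne'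

lemma hasDerivAt_artanh {x : ℝ} (hx : x ∈ Ioo (-1) 1) :
    HasDerivAt artanh (1 / (1 - x ^ 2)) x := by
  have h₁ : 1 - x ≠ 0 := by linarith [hx.2]
  have h₂ : 1 + x ≠ 0 := by linarith [hx.1]
  have hq : HasDerivAt (fun y ↦ (1 + y) / (1 - y)) ((1 * (1 - x) - (1 + x) * -1) / (1 - x) ^ 2) x :=
    ((hasDerivAt_id' x).const_add 1).div ((hasDerivAt_id' x).const_sub 1) h₁
  show HasDerivAt (fun y ↦ Real.log ((1 + y) / (1 - y)) / 2) _ x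
  refine ((hq.log (div_ne_zero h₂ h₁)).div_const 2).congr_deriv ?_
  have h₃ : 1 - x ^ 2 ≠ 0 := by
    rw [show 1 - x ^ 2 = (1 - x) * (1 + x) by ring]
    exact mul_ne_zero h₁ h₂
  field_simp
  ring

lemma artanh_neg (x : ℝ) : artanh (-x) = -artanh x := by
  rw [artanh, artanh, show (1 + -x) / (1 - -x) = ((1 + x) / (1 - x))⁻¹ by rw [inv_div]; ring,
    Real.log_inv, neg_div]

noncomputable def dSReal (x : ℝ) : ℝ := 2 * artanh (Real.tan (π / 4 * x))

lemma dSReal_zero : dSReal 0 = 0 := by simp [dSReal, artanh]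

lemma dSReal_neg (x : ℝ) : dSReal (-x) = -dSReal x := by
  rw [dSReal, mul_neg, Real.tan_neg, artanh_neg, dSReal, mul_neg]

lemma dSReal_four_div_pi_mul_arctan (r : ℝ) :
    dSReal (4 / π * Real.arctan r) = Real.log ((1 + r) / (1 - r)) := by
  rw [dSReal, ← mul_assoc, div_mul_div_cancel₀ (by positivity), div_self (by positivity), one_mul,
    Real.tan_arctan, artanh]
  ring

lemma tan_pi_div_four_mul_mem_Ioo {x : ℝ} (hx : x ∈ Ioo (-1) 1) :
    Real.tan (π / 4 * x) ∈ Ioo (-1) 1 := by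
  have hπ := Real.pi_pos
  have h₁ : Real.tan (-(π / 4)) < Real.tan (π / 4 * x) :=
    Real.tan_lt_tan_of_lt_of_lt_pi_div_two (by linarith) (by nlinarith [hx.2]) (by nlinarith [hx.1])
  have h₂ : Real.tan (π / 4 * x) < Real.tan (π / 4) :=
    Real.tan_lt_tan_of_lt_of_lt_pi_div_two (by nlinarith [hx.1]) (by linarith) (by nlinarith [hx.2])
  rw [Real.tan_neg, Real.tan_pi_div_four] at h₁
  rw [Real.tan_pi_div_four] at h₂
  exact ⟨h₁, h₂⟩

lemma hasDerivAt_dSReal {x : ℝ} (hx : x ∈ Ioo (-1) 1) : HasDerivAt dSReal (rhoS x) x := by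
  have hcos : 0 < Real.cos (π / 4 * x) :=
    Real.cos_pos_of_mem_Ioo ⟨by nlinarith [hx.1, Real.pi_pos], by nlinarith [hx.2, Real.pi_pos]⟩
  have hcos_two_mul :
      Real.cos (π / 2 * x) = Real.cos (π / 4 * x) ^ 2 - Real.sin (π / 4 * x) ^ 2 := by
    rw [← Real.cos_two_mul']
    ring_nf
  have htan : HasDerivAt (fun y ↦ Real.tan (π / 4 * y))
      (1 / Real.cos (π / 4 * x) ^ 2 * (π / 4 * 1)) x :=
    (Real.hasDerivAt_tan hcos.ne').comp x ((hasDerivAt_id x).const_mul (π / 4))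
  refine (((hasDerivAt_artanh (tan_pi_div_four_mul_mem_Ioo hx)).comp x htan).const_mul
    2).congr_deriv ?_
  have hden := (cos_pi_div_two_mul_pos hx).ne'
  rw [hcos_two_mul] at hden
  rw [rhoS, ofReal_re, Real.tan_eq_sin_div_cos, hcos_two_mul]
  generalize Real.cos (π / 4 * x) = c at hcos hden ⊢
  generalize Real.sin (π / 4 * x) = s at hden ⊢
  field_simp
  ring

lemma continuousOn_dSReal : ContinuousOn dSReal (Ioo (-1) 1) :=
  fun _ hx ↦ (hasDerivAt_dSReal hx).continuousAt.continuousWithinAt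

lemma strictMonoOn_dSReal : StrictMonoOn dSReal (Ioo (-1) 1) := by
  refine strictMonoOn_of_deriv_pos (convex_Ioo _ _) continuousOn_dSReal fun x hx ↦ ?_
  rw [interior_Ioo] at hx
  rw [(hasDerivAt_dSReal hx).deriv]
  exact rhoS_pos hx

lemma dSReal_nonneg {x : ℝ} (hx : x ∈ Ico 0 1) : 0 ≤ dSReal x :=
  dSReal_zero ▸ strictMonoOn_dSReal.monotoneOn ⟨by norm_num, by norm_num⟩
    ⟨by linarith [hx.1], hx.2⟩ hx.1

lemma abs_dSReal {x : ℝ} (hx : x ∈ Ioo (-1) 1) : |dSReal x| = dSReal |x| := by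
  rcases le_or_gt 0 x with h | h
  · rw [abs_of_nonneg h, abs_of_nonneg (dSReal_nonneg ⟨h, hx.2⟩)]
  · rw [abs_of_neg h, dSReal_neg, abs_of_nonpos]
    linarith [dSReal_neg x, dSReal_nonneg (x := -x) ⟨by linarith, by linarith [hx.1]⟩]

lemma hypLenS_eq_integral_derivWithin (γ : ℝ → ℂ) :
    hypLenS γ = ∫ t in (0 : ℝ)..1, rhoS (γ t) * ‖derivWithin γ (Icc 0 1) t‖ :=
  intervalIntegral.integral_congr_Ioo_of_le zero_le_one fun _ ht ↦ by
    rw [derivWithin_of_mem_nhds (Icc_mem_nhds ht.1 ht.2)]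

lemma abs_sub_dSReal_re_le_hypLenS {γ : ℝ → ℂ} (hγ : ContDiffOn ℝ 1 γ (Icc 0 1))
    (hS : ∀ t ∈ Icc (0 : ℝ) 1, γ t ∈ stripS) :
    |dSReal (γ 1).re - dSReal (γ 0).re| ≤ hypLenS γ := by
  set D := derivWithin γ (Icc 0 1)
  have hDc : ContinuousOn D (Icc 0 1) :=
    hγ.continuousOn_derivWithin (uniqueDiffOn_Icc one_pos) le_rfl
  have hρc : ContinuousOn (fun t ↦ rhoS (γ t)) (Icc 0 1) :=
    continuousOn_rhoS.comp hγ.continuousOn hS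
  have hFTC : ∫ t in (0 : ℝ)..1, rhoS (γ t) * (D t).re = dSReal (γ 1).re - dSReal (γ 0).re := by
    refine intervalIntegral.integral_eq_sub_of_hasDerivAt_of_le zero_le_one
      (continuousOn_dSReal.comp (continuous_re.comp_continuousOn hγ.continuousOn) hS)
      (fun t ht ↦ ?_) ((hρc.mul (continuous_re.comp_continuousOn hDc)).intervalIntegrable_of_Icc
        zero_le_one)
    have hγt : HasDerivAt γ (D t) t :=
      ((hγ.differentiableOn one_ne_zero t (Ioo_subset_Icc_self ht)).hasDerivWithinAt).hasDerivAt
        (Icc_mem_nhds ht.1 ht.2)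
    exact (hasDerivAt_dSReal (hS t (Ioo_subset_Icc_self ht))).comp t
      (reCLM.hasFDerivAt.comp_hasDerivAt t hγt)
  rw [← hFTC, hypLenS_eq_integral_derivWithin, ← Real.norm_eq_abs]
  refine intervalIntegral.norm_integral_le_of_norm_le zero_le_one
    (MeasureTheory.ae_of_all _ fun t ht ↦ ?_)
    ((hρc.mul hDc.norm).intervalIntegrable_of_Icc zero_le_one)
  have hρ := (rhoS_pos (hS t (Ioc_subset_Icc_self ht))).le
  rw [norm_mul, Real.norm_of_nonneg hρ]
  exact mul_le_mul_of_nonneg_left (abs_re_le_norm _) hρ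

lemma convex_stripS : Convex ℝ stripS := (convex_Ioo (-1 : ℝ) 1).linear_preimage reLm

lemma hypLenS_nonneg {γ : ℝ → ℂ} (hS : ∀ t ∈ Icc (0 : ℝ) 1, γ t ∈ stripS) : 0 ≤ hypLenS γ :=
  intervalIntegral.integral_nonneg zero_le_one fun t ht ↦
    mul_nonneg (rhoS_pos (hS t ht)).le (norm_nonneg _)

lemma dS_le_hypLenS {z w : ℂ} {γ : ℝ → ℂ} (hγ : ContDiffOn ℝ 1 γ (Icc 0 1)) (h₀ : γ 0 = z)
    (h₁ : γ 1 = w) (hS : ∀ t ∈ Icc (0 : ℝ) 1, γ t ∈ stripS) : dS z w ≤ hypLenS γ :=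
  csInf_le ⟨0, by rintro _ ⟨γ, -, -, -, hS, rfl⟩; exact hypLenS_nonneg hS⟩ ⟨γ, hγ, h₀, h₁, hS, rfl⟩

lemma abs_sub_dSReal_re_le_dS {z w : ℂ} (hz : z ∈ stripS) (hw : w ∈ stripS) :
    |dSReal w.re - dSReal z.re| ≤ dS z w := by
  refine le_csInf ⟨_, AffineMap.lineMap z w, (AffineMap.contDiff_lineMap z w).contDiffOn,
    AffineMap.lineMap_apply_zero z w, AffineMap.lineMap_apply_one z w,
    fun t ht ↦ convex_stripS.lineMap_mem hz hw ht, rfl⟩ ?_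
  rintro _ ⟨γ, hγ, rfl, rfl, hS, rfl⟩
  exact abs_sub_dSReal_re_le_hypLenS hγ hS

lemma hypLenS_lineMap_ofReal_zero {x : ℝ} (hx : x ∈ Ioo (-1) 1) :
    hypLenS (AffineMap.lineMap (x : ℂ) 0) = dSReal |x| := by
  have hseg : ∀ t : ℝ, AffineMap.lineMap (x : ℂ) 0 t = (((1 - t) * x : ℝ) : ℂ) := fun t ↦ by
    simp [AffineMap.lineMap_apply_module, Complex.real_smul]
  have hmem : ∀ t ∈ Icc (0 : ℝ) 1, (1 - t) * |x| ∈ Ioo (-1) 1 := fun t ht ↦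
    ⟨by nlinarith [abs_nonneg x, ht.2], by nlinarith [abs_lt.mpr hx, abs_nonneg x, ht.1, ht.2]⟩
  have hintegrand : EqOn (fun t ↦ rhoS (AffineMap.lineMap (x : ℂ) 0 t) *
      ‖deriv (AffineMap.lineMap (x : ℂ) 0) t‖)
      (fun t ↦ rhoS ((1 - t) * |x| : ℝ) * |x|) (uIcc 0 1) := by
    intro t ht
    rw [uIcc_of_le zero_le_one] at ht
    simp only [hseg, AffineMap.hasDerivAt_lineMap.deriv, zero_sub, norm_neg, norm_real,
      Real.norm_eq_abs, ← rhoS_ofReal_abs ((1 - t) * x), abs_mul, abs_of_nonneg (sub_nonneg.2 ht.2)]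
  have hderiv : ∀ t ∈ uIcc (0 : ℝ) 1, HasDerivAt (fun t ↦ -dSReal ((1 - t) * |x|))
      (rhoS ((1 - t) * |x| : ℝ) * |x|) t := fun t ht ↦ by
    rw [uIcc_of_le zero_le_one] at ht
    refine (((hasDerivAt_dSReal (hmem t ht)).comp t
      (((hasDerivAt_id' t).const_sub 1).mul_const |x|)).neg).congr_deriv ?_
    ring
  have hint :
      IntervalIntegrable (fun t ↦ rhoS ((1 - t) * |x| : ℝ) * |x|) MeasureTheory.volume 0 1 :=
    ((continuousOn_rhoS.comp (by fun_prop) fun t ht ↦ hmem t ht).mul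
      continuousOn_const).intervalIntegrable_of_Icc zero_le_one
  rw [hypLenS, intervalIntegral.integral_congr hintegrand,
    intervalIntegral.integral_eq_sub_of_hasDerivAt hderiv hint]
  simp [dSReal_zero]

lemma zero_mem_stripS : (0 : ℂ) ∈ stripS := by norm_num [stripS]

lemma dSReal_abs_re_le_dS {z : ℂ} (hz : z ∈ stripS) : dSReal |z.re| ≤ dS z 0 := by
  have h := abs_sub_dSReal_re_le_dS hz zero_mem_stripS
  rwa [zero_re, dSReal_zero, zero_sub, abs_neg, abs_dSReal hz] at h

lemma dS_ofReal_zero {x : ℝ} (hx : x ∈ Ioo (-1) 1) : dS x 0 = dSReal |x| := by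
  refine le_antisymm ?_ (by simpa using dSReal_abs_re_le_dS (z := x) hx)
  rw [← hypLenS_lineMap_ofReal_zero hx]
  exact dS_le_hypLenS (AffineMap.contDiff_lineMap _ _).contDiffOn
    (AffineMap.lineMap_apply_zero _ _) (AffineMap.lineMap_apply_one _ _)
    fun t ht ↦ convex_stripS.lineMap_mem hx zero_mem_stripS ht

lemma four_div_pi_mul_arctan_mem_Ioo {r : ℝ} (hr : r ∈ Ioo (-1) 1) :
    4 / π * Real.arctan r ∈ Ioo (-1) 1 := by
  have h₄π : 0 < 4 / π := by positivity
  have h₁ := mul_lt_mul_of_pos_left (Real.arctan_strictMono hr.1) h₄π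
  have h₂ := mul_lt_mul_of_pos_left (Real.arctan_strictMono hr.2) h₄π
  rw [Real.arctan_neg, Real.arctan_one, mul_neg, div_mul_div_cancel₀ Real.pi_ne_zero,
    div_self four_ne_zero] at h₁
  rw [Real.arctan_one, div_mul_div_cancel₀ Real.pi_ne_zero, div_self four_ne_zero] at h₂
  exact ⟨h₁, h₂⟩

/-- the image under `Re` of the closed hyperbolic disc of radius
`λ(r)` centered at `0` in the strip is exactly `[-(4/π)arctan r, (4/π)arctan r]`. -/
theorem re_image_hyperbolic_disc (r : ℝ) (hr : r ∈ Set.Ioo (0:ℝ) 1) :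
    Complex.re '' {z : ℂ | z ∈ stripS ∧ dS z 0 ≤ Real.log ((1 + r) / (1 - r))}
      = Set.Icc (-((4 / Real.pi) * Real.arctan r)) ((4 / Real.pi) * Real.arctan r) := by
  set c := 4 / π * Real.arctan r
  have hc : c ∈ Ioo (-1) 1 := four_div_pi_mul_arctan_mem_Ioo ⟨by linarith [hr.1], hr.2⟩
  have habs {x : ℝ} (hx : |x| < 1) : |x| ∈ Ioo (-1) 1 := ⟨by linarith [abs_nonneg x], hx⟩
  rw [← dSReal_four_div_pi_mul_arctan]
  ext x
  refine ⟨?_, fun hx ↦ ?_⟩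
  · rintro ⟨z, ⟨hz, hdist⟩, rfl⟩
    have hzc : dSReal |z.re| ≤ dSReal c := (dSReal_abs_re_le_dS hz).trans hdist
    exact abs_le.mp ((strictMonoOn_dSReal.le_iff_le (habs (abs_lt.mpr hz)) hc).mp hzc)
  · have hxc : |x| ≤ c := abs_le.mpr hx
    have hx₁ : x ∈ Ioo (-1) 1 := abs_lt.mp (hxc.trans_lt hc.2)
    refine ⟨x, ⟨hx₁, ?_⟩, ofReal_re x⟩
    rw [dS_ofReal_zero hx₁]
    exact (strictMonoOn_dSReal.le_iff_le (habs (abs_lt.mpr hx₁)) hc).mpr hxc
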